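/- arXiv:1101.5345 — 4 statements merged into one kernel-verified Lean document; each statement's English description precedes it below -/
import Mathlib

section
/- Let n ≥ 1, let w ≥ 1 be an integer and let c be a real cutoff level. Let (y, x) be an edge of the Boolean lattice with x = y^{⊕i} for a coordinate i with y_i = 1, let ℓ = h(y), and assume h(x) = ℓ − 1 ≥ ⌈c⌉. Then the probability that a random walk of length w down the Boolean lattice with cutoff at level c, from a uniform start, traverses the edge (y, x) equals 2^{−n} · (1/ℓ) · (1 + Σ_{i=1}^{w−1} ∏_{j=0}^{i−1} (n−ℓ−j)/(ℓ+i−j)). -/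
/-- Hamming weight of a point of the Boolean lattice `{0,1}^n`. -/
def hw {n : ℕ} (x : Fin n → Bool) : ℕ := (Finset.univ.filter (fun i => x i = true)).card

/-- `bflip x i` is `x` with its `i`-th coordinate flipped. -/
def bflip {n : ℕ} (x : Fin n → Bool) (i : Fin n) : Fin n → Bool :=
  Function.update x i (!x i)

/-- The position of the walk after `t` steps, when the walk starts at `v` and
successively flips to 0 the coordinates of `v` that equal 1, in the order given by the
linear ordering `σ` of these coordinates. -/
def walkPos {n : ℕ} (v : Fin n → Bool) (σ : Fin (hw v) ≃ {i : Fin n // v i = true})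
    (t : ℕ) : Fin n → Bool :=
  fun i => v i && ! decide (∃ s : Fin (hw v), (s : ℕ) < t ∧ (σ s).val = i)

/-- The number of steps performed by a random walk of length `w` down the Boolean
lattice with cutoff at level `c`, when started at `v`:
`min(w, max(0, h(v) − ⌈c⌉))`. -/
noncomputable def nsteps {n : ℕ} (w : ℕ) (c : ℝ) (v : Fin n → Bool) : ℕ :=
  min w ((hw v : ℤ) - ⌈c⌉).toNat

/-- The probability of an event `P` in the finite probability space of pairs `(v, σ)`,
where `v` is uniform in `{0,1}^n` and `σ` is an independent uniformly random linear
ordering of the coordinates on which `v` equals 1. -/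
noncomputable def walkProb {n : ℕ}
    (P : (v : Fin n → Bool) → (Fin (hw v) ≃ {i : Fin n // v i = true}) → Prop) : ℝ :=
  (2 ^ n : ℝ)⁻¹ * ∑ v : Fin n → Bool,
    (Nat.card {σ : Fin (hw v) ≃ {i : Fin n // v i = true} // P v σ} : ℝ) /
      (Nat.factorial (hw v))

/-- The walk `(v, σ)` (of length `w`, with cutoff at level `c`) traverses the edge
`(y, x)` if at some step it moves from the point `y` to the point `x`. -/
def traverses {n : ℕ} (w : ℕ) (c : ℝ) (y x : Fin n → Bool)
    (v : Fin n → Bool) (σ : Fin (hw v) ≃ {i : Fin n // v i = true}) : Prop :=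
  ∃ t : ℕ, t < nsteps w c v ∧ walkPos v σ t = y ∧ walkPos v σ (t + 1) = x

/-!
A walk from `v` traverses `(y, y^{⊕i})` exactly when `y ≤ v` and, writing `a = h(v) - ℓ`, the
ordering `σ` first flips the `a` coordinates of `v` outside `y`, then `i`, then the other `ℓ - 1`
coordinates of `y`, and `a < w`; the cutoff never interferes because `h(x) ≥ ⌈c⌉`. Counting
orderings fibre by fibre, `a! (ℓ - 1)!` of the `(ℓ + a)!` orderings do this. There are
`C(n - ℓ, a)` starts `v ≥ y` of weight `ℓ + a`, and
`C(n - ℓ, a) a! (ℓ - 1)! / (ℓ + a)! = (1/ℓ) ∏_{j<a} (n - ℓ - j) / (ℓ + a - j)`.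
-/

open Finset

section FiberCount

variable {α β ι : Type*}

theorem Equiv.card_fiber_eq_of_comp_eq {f : β → ι} {g : α → ι} (σ : α ≃ β) (h : f ∘ σ = g)
    (k : ι) : Nat.card {a // g a = k} = Nat.card {b // f b = k} :=
  Nat.card_congr (σ.subtypeEquiv fun a => by rw [← h, Function.comp_apply])

variable [Fintype α] [Fintype β] [Fintype ι] [DecidableEq α] [DecidableEq ι]

theorem card_equiv_comp_eq (f : β → ι) (g : α → ι)
    (h : ∀ k, Nat.card {a // g a = k} = Nat.card {b // f b = k}) :
    Nat.card {σ : α ≃ β // f ∘ σ = g} = ∏ k, (Nat.card {a // g a = k}).factorial := by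
  let σ₀ : α ≃ β := Equiv.ofFiberEquiv fun k => (Finite.card_eq.mp (h k)).some
  have hσ₀ : f ∘ σ₀ = g := funext (Equiv.ofFiberEquiv_map _)
  -- composing with one fibre-preserving bijection `σ₀` reduces to permutations stabilising `g`
  have e : {σ : α ≃ β // f ∘ σ = g} ≃ {τ : Equiv.Perm α // g ∘ τ = g} :=
    (Equiv.equivCongr (Equiv.refl α) σ₀.symm).subtypeEquiv fun σ => by
      have hcomp : g ∘ Equiv.equivCongr (Equiv.refl α) σ₀.symm σ = f ∘ σ := by
        rw [← hσ₀]; ext; simp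
      rw [hcomp]
  simp_rw [Nat.card_congr e, Nat.card_eq_fintype_card, DomMulAct.stabilizer_card]

end FiberCount

section Walk

variable {n : ℕ}

theorem Pi.bool_eq_true_of_le {α : Type*} {z v : α → Bool} (h : z ≤ v) {j : α}
    (hj : z j = true) : v j = true :=
  Bool.le_iff_imp.mp (h j) hj

theorem bflip_le {y : Fin n → Bool} {i : Fin n} (hyi : y i = true) : bflip y i ≤ y := by
  intro j
  by_cases hj : j = i
  · subst hj; simp [bflip, hyi]
  · simp [bflip, Function.update_of_ne hj]

theorem hw_pos {y : Fin n → Bool} {i : Fin n} (hyi : y i = true) : 0 < hw y :=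
  card_pos.mpr ⟨i, by simpa using hyi⟩

theorem hw_mono : Monotone (hw : (Fin n → Bool) → ℕ) := fun _ _ h =>
  card_le_card (monotone_filter_right _ fun _ _ => Pi.bool_eq_true_of_le h)

theorem hw_le (y : Fin n → Bool) : hw y ≤ n :=
  (card_filter_le _ _).trans_eq (card_fin n)

theorem hw_sub_hw_of_le {y v : Fin n → Bool} (hyv : y ≤ v) :
    hw v - hw y = #{j | v j = true ∧ y j = false} := by
  have hsub : univ.filter (y · = true) ⊆ univ.filter (v · = true) :=
    monotone_filter_right _ fun _ _ => Pi.bool_eq_true_of_le hyv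
  rw [hw, hw, ← card_sdiff_of_subset hsub]
  congr 1; ext j; simp

variable {v : Fin n → Bool} {σ : Fin (hw v) ≃ {j : Fin n // v j = true}}

theorem walkPos_le (t : ℕ) : walkPos v σ t ≤ v := fun _ => Bool.and_le_left _ _

theorem walkPos_apply_equiv (t : ℕ) (s : Fin (hw v)) :
    walkPos v σ t (σ s) = decide (t ≤ (s : ℕ)) := by
  have hvisited : (∃ s' : Fin (hw v), (s' : ℕ) < t ∧ (σ s').val = σ s) ↔ (s : ℕ) < t :=
    ⟨fun ⟨s', hs', he⟩ => σ.injective (Subtype.ext he) ▸ hs', fun h => ⟨s, h, rfl⟩⟩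
  simp only [walkPos, (σ s).2, Bool.true_and, decide_eq_decide.mpr hvisited]
  simp only [← decide_not, Nat.not_lt]

theorem walkPos_eq_iff {z : Fin n → Bool} (hz : z ≤ v) (t : ℕ) :
    walkPos v σ t = z ↔ ∀ s, z (σ s) = decide (t ≤ (s : ℕ)) := by
  rw [funext_iff]
  constructor
  · intro h s
    rw [← h, walkPos_apply_equiv]
  · intro h j
    cases hvj : v j
    · have hzj := hz j
      have hwj := walkPos_le (σ := σ) t j
      simp_all [Bool.le_iff_imp]
    · obtain ⟨s, hs⟩ := σ.surjective ⟨j, hvj⟩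
      rw [show j = σ s by rw [hs], walkPos_apply_equiv, h]

end Walk

section Traversal

variable {n : ℕ} {y v : Fin n → Bool} {i : Fin n}

/-- Whether a walk through the edge `(y, y^{⊕i})` flips coordinate `j` before (`lt`), at (`eq`)
or after (`gt`) the step crossing the edge. -/
def edgeClass (y : Fin n → Bool) (i j : Fin n) : Ordering :=
  if y j = false then .lt else if j = i then .eq else .gt

theorem and_bflip_eq_decide_iff (hyi : y i = true) (j : Fin n) (t u : ℕ) :
    (y j = decide (t ≤ u) ∧ bflip y i j = decide (t + 1 ≤ u)) ↔ edgeClass y i j = compare u t := by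
  unfold edgeClass bflip
  by_cases hj : j = i
  · subst hj
    simp [hyi, eq_comm (a := Ordering.eq)]
    omega
  · rw [Function.update_of_ne hj]
    cases y j
    · simp [eq_comm (a := Ordering.lt), compare_lt_iff_lt]
      omega
    · simp [hj, eq_comm (a := Ordering.gt), compare_gt_iff_gt]
      omega

variable {σ : Fin (hw v) ≃ {j : Fin n // v j = true}}

theorem traverses_iff_exists_time {w : ℕ} {c : ℝ} (hyi : y i = true) (hyv : y ≤ v) :
    traverses w c y (bflip y i) v σ ↔
      ∃ t < nsteps w c v,
        (edgeClass y i ∘ Subtype.val) ∘ σ = fun s : Fin (hw v) => compare (s : ℕ) t := by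
  simp only [traverses, walkPos_eq_iff hyv, walkPos_eq_iff ((bflip_le hyi).trans hyv),
    ← forall_and, and_bflip_eq_decide_iff hyi, funext_iff, Function.comp_apply]

theorem card_compare_lt {m a : ℕ} (h : a ≤ m) :
    Nat.card {s : Fin m // compare (s : ℕ) a = .lt} = a := by
  simp_rw [compare_lt_iff_lt]
  rw [Nat.card_eq_fintype_card, Fintype.card_subtype, Fin.card_filter_val_lt, min_eq_right h]

theorem card_compare_eq {m a : ℕ} (h : a < m) :
    Nat.card {s : Fin m // compare (s : ℕ) a = .eq} = 1 := by
  simp_rw [compare_eq_iff_eq, ← Fin.ext_iff (b := ⟨a, h⟩)]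
  rw [Nat.card_eq_fintype_card, Fintype.card_subtype_eq]

theorem card_compare_gt {m a : ℕ} (h : a < m) :
    Nat.card {s : Fin m // compare (s : ℕ) a = .gt} = m - a - 1 := by
  have hgt (s : Fin m) : compare (s : ℕ) a = .gt ↔ ¬ (s : ℕ) < a + 1 := by
    rw [compare_gt_iff_gt]; omega
  simp_rw [hgt]
  rw [Nat.card_eq_fintype_card, Fintype.card_subtype_compl, Fintype.card_subtype,
    Fintype.card_fin, Fin.card_filter_val_lt]
  omega

theorem card_edgeClass_fiber (o : Ordering) :
    Nat.card {j : {j : Fin n // v j = true} // edgeClass y i j = o}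
      = #{j | v j = true ∧ edgeClass y i j = o} := by
  rw [Nat.card_congr (Equiv.subtypeSubtypeEquivSubtypeInter (v · = true) (edgeClass y i · = o)),
    Nat.card_eq_fintype_card, Fintype.card_subtype]

theorem card_edgeClass_lt (hyv : y ≤ v) :
    Nat.card {j : {j : Fin n // v j = true} // edgeClass y i j = .lt} = hw v - hw y := by
  rw [card_edgeClass_fiber, hw_sub_hw_of_le hyv]
  congr 1; ext j; simp [edgeClass]

theorem card_edgeClass_eq (hyi : y i = true) (hyv : y ≤ v) :
    Nat.card {j : {j : Fin n // v j = true} // edgeClass y i j = .eq} = 1 := by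
  rw [card_edgeClass_fiber, card_eq_one]
  refine ⟨i, ?_⟩
  ext j; by_cases hj : j = i
  · subst hj; simp [edgeClass, hyi, Pi.bool_eq_true_of_le hyv hyi]
  · simp [edgeClass, hj]

theorem card_edgeClass_gt (hyi : y i = true) (hyv : y ≤ v) :
    Nat.card {j : {j : Fin n // v j = true} // edgeClass y i j = .gt} = hw y - 1 := by
  rw [card_edgeClass_fiber, hw, ← card_erase_of_mem (a := i) (by simpa using hyi)]
  congr 1; ext j
  cases hy : y j
  · simp [edgeClass, hy]
  · simp [edgeClass, hy, Pi.bool_eq_true_of_le hyv hy]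

theorem time_eq_of_comp_eq (hyi : y i = true) (hyv : y ≤ v) {t : ℕ}
    (h : (edgeClass y i ∘ Subtype.val) ∘ σ = fun s : Fin (hw v) => compare (s : ℕ) t) :
    t = hw v - hw y := by
  obtain ⟨s₀, hs₀⟩ := σ.surjective ⟨i, Pi.bool_eq_true_of_le hyv hyi⟩
  have hs₀t : (s₀ : ℕ) = t := by
    have h₀ := congrFun h s₀
    simp only [Function.comp_apply, hs₀, edgeClass, hyi] at h₀
    exact compare_eq_iff_eq.mp (by simpa using h₀.symm)
  rw [← card_compare_lt (a := t) (hs₀t ▸ s₀.2.le), σ.card_fiber_eq_of_comp_eq h]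
  exact card_edgeClass_lt hyv

theorem traverses_iff_comp_eq {w : ℕ} {c : ℝ} (hyi : y i = true) (hyv : y ≤ v)
    (hcut : ⌈c⌉ ≤ (hw y : ℤ) - 1) :
    traverses w c y (bflip y i) v σ ↔ hw v - hw y < w ∧
      (edgeClass y i ∘ Subtype.val) ∘ σ = fun s : Fin (hw v) => compare (s : ℕ) (hw v - hw y) := by
  have hsteps : hw v - hw y < nsteps w c v ↔ hw v - hw y < w := by
    have : hw v - hw y < ((hw v : ℤ) - ⌈c⌉).toNat := by have := hw_mono hyv; omega
    simp [nsteps, this]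
  rw [traverses_iff_exists_time hyi hyv]
  constructor
  · rintro ⟨t, ht, h⟩
    obtain rfl := time_eq_of_comp_eq hyi hyv h
    exact ⟨hsteps.mp ht, h⟩
  · rintro ⟨haw, h⟩
    exact ⟨_, hsteps.mpr haw, h⟩

theorem card_comp_eq_compare (hyi : y i = true) (hyv : y ≤ v) :
    Nat.card {σ : Fin (hw v) ≃ {j : Fin n // v j = true} //
        (edgeClass y i ∘ Subtype.val) ∘ σ = fun s : Fin (hw v) => compare (s : ℕ) (hw v - hw y)}
      = (hw v - hw y).factorial * (hw y - 1).factorial := by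
  have hyv' := hw_mono hyv
  have hy0 := hw_pos hyi
  have hav : hw v - hw y < hw v := by omega
  rw [card_equiv_comp_eq]
  · rw [show (univ : Finset Ordering) = {.lt, .eq, .gt} from rfl, prod_insert (by decide),
      prod_insert (by decide), prod_singleton, card_compare_lt hav.le, card_compare_eq hav,
      card_compare_gt hav, show hw v - (hw v - hw y) - 1 = hw y - 1 by omega, Nat.factorial_one,
      one_mul]
  · intro k
    cases k
    · rw [card_compare_lt hav.le]; exact (card_edgeClass_lt hyv).symm
    · rw [card_compare_eq hav]; exact (card_edgeClass_eq hyi hyv).symm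
    · rw [card_compare_gt hav]; exact ((card_edgeClass_gt hyi hyv).trans (by omega)).symm

theorem card_traverses {w : ℕ} {c : ℝ} (hyi : y i = true) (hyv : y ≤ v)
    (hcut : ⌈c⌉ ≤ (hw y : ℤ) - 1) :
    Nat.card {σ // traverses w c y (bflip y i) v σ}
      = if hw v - hw y < w then (hw v - hw y).factorial * (hw y - 1).factorial else 0 := by
  simp_rw [traverses_iff_comp_eq hyi hyv hcut]
  split_ifs with haw
  · simp only [haw, true_and]
    exact card_comp_eq_compare hyi hyv
  · simp [haw]

theorem card_traverses_of_not_le {w : ℕ} {c : ℝ} {x : Fin n → Bool} (hyv : ¬ y ≤ v) :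
    Nat.card {σ // traverses w c y x v σ} = 0 := by
  rw [Nat.card_eq_zero]
  exact .inl ⟨fun ⟨_, t, _, hy, _⟩ => hyv (hy ▸ walkPos_le t)⟩

end Traversal

section Sums

variable {n : ℕ}

open scoped Classical in
theorem sum_ite_le_eq_sum_choose (y : Fin n → Bool) (D : ℕ → ℝ) :
    ∑ v, (if y ≤ v then D (hw v - hw y) else 0)
      = ∑ m ∈ range (n - hw y + 1), ((n - hw y).choose m : ℝ) * D m := by
  have hsupersets :
      ∑ v with y ≤ v, D (hw v - hw y) = ∑ U ∈ (univ.filter (y · = false)).powerset, D #U := by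
    refine sum_nbij' (fun v => univ.filter fun j => v j = true ∧ y j = false)
      (fun U j => y j || decide (j ∈ U)) ?_ ?_ ?_ ?_ ?_
    · intro v _; simp [subset_iff]
    · intro U _
      simpa [Pi.le_def, Bool.le_iff_imp] using fun j (h : y j = true) => Or.inl h
    · intro v hv
      funext j
      have := (mem_filter.mp hv).2 j
      cases hy : y j <;> simp_all [Bool.le_iff_imp]
    · intro U hU
      ext j
      have hUj : j ∈ U → y j = false := fun h => by simpa using mem_powerset.mp hU h
      cases hy : y j <;> simp_all
    · intro v hv; rw [hw_sub_hw_of_le (by simpa using hv)]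
  have hcard : #{j | y j = false} = n - hw y := by
    have := card_filter_add_card_filter_not (s := (univ : Finset (Fin n))) (y · = true)
    simp only [card_univ, Fintype.card_fin, Bool.not_eq_true] at this
    rw [hw]; omega
  rw [← sum_filter, hsupersets, sum_powerset_apply_card, hcard]
  simp [nsmul_eq_mul]

end Sums

section Arithmetic

open Nat

theorem choose_mul_factorial_div_factorial (K ℓ m : ℕ) (hℓ : 0 < ℓ) :
    (K.choose m : ℝ) * ((m ! * (ℓ - 1)! : ℕ) / (ℓ + m)!)
      = 1 / ℓ * ∏ j ∈ range m, ((K : ℝ) - j) / ((ℓ : ℝ) + m - j) := by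
  have hprod (N : ℕ) : ∏ j ∈ range m, ((N : ℝ) - j) = N.descFactorial m := by
    rw [← descPochhammer_eval_eq_prod_range, descPochhammer_eval_eq_descFactorial]
  have hden : ∏ j ∈ range m, ((ℓ : ℝ) + m - j) = (ℓ + m).descFactorial m := by
    rw [← hprod]; push_cast; rfl
  have hfac : ((ℓ + m)! : ℝ) = ℓ * (ℓ - 1)! * (ℓ + m).descFactorial m := by
    rw [← Nat.factorial_mul_descFactorial (Nat.le_add_left m ℓ), Nat.add_sub_cancel,
      ← Nat.mul_factorial_pred hℓ.ne']
    push_cast; ring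
  have hdesc : ((ℓ + m).descFactorial m : ℝ) ≠ 0 := by
    exact_mod_cast (Nat.descFactorial_pos.mpr (Nat.le_add_left m ℓ)).ne'
  rw [prod_div_distrib, hprod, hden, Nat.descFactorial_eq_factorial_mul_choose, hfac]
  push_cast
  field_simp

theorem sum_range_choose_mul_ite (K w : ℕ) (E : ℕ → ℝ) :
    ∑ m ∈ range (K + 1), (K.choose m : ℝ) * (if m < w then E m else 0)
      = ∑ m ∈ range w, (K.choose m : ℝ) * E m := by
  have hfilter : (range (K + 1)).filter (· < w) = range (min (K + 1) w) := by
    ext m; simp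
  rw [← sum_subset (range_subset_range.mpr (min_le_right (K + 1) w)), ← hfilter, sum_filter]
  · simp_rw [mul_ite, mul_zero]
  · intro m hm hm'
    simp only [mem_range, lt_min_iff, not_and_or, not_lt] at hm hm'
    rw [Nat.choose_eq_zero_of_lt (by omega), Nat.cast_zero, zero_mul]

end Arithmetic

theorem prob_traverse_edge_general (n : ℕ) (w : ℕ) (hw1 : 1 ≤ w) (c : ℝ)
    (y : Fin n → Bool) (i : Fin n) (hyi : y i = true) (ℓ : ℕ) (hℓ : hw y = ℓ)
    (hcut : ⌈c⌉ ≤ (ℓ : ℤ) - 1) :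
    walkProb (fun v σ => traverses w c y (bflip y i) v σ)
      = (2 ^ n : ℝ)⁻¹ * (1 / ℓ) *
        (1 + ∑ a ∈ Finset.Icc 1 (w - 1), ∏ j ∈ Finset.range a,
          ((n : ℝ) - ℓ - j) / ((ℓ : ℝ) + a - j)) := by
  classical
  subst hℓ
  let D (m : ℕ) : ℝ :=
    if m < w then ((m.factorial * (hw y - 1).factorial : ℕ) : ℝ) / (hw y + m).factorial else 0
  have hterm (v : Fin n → Bool) :
      (Nat.card {σ // traverses w c y (bflip y i) v σ} : ℝ) / (hw v).factorial
        = if y ≤ v then D (hw v - hw y) else 0 := by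
    by_cases hyv : y ≤ v
    · obtain ⟨m, hm⟩ := Nat.exists_eq_add_of_le (hw_mono hyv)
      rw [card_traverses hyi hyv hcut, if_pos hyv, hm, Nat.add_sub_cancel_left]
      split_ifs <;> simp [D, *]
    · rw [card_traverses_of_not_le hyv, if_neg hyv, Nat.cast_zero, zero_div]
  have hcast (j : ℕ) : (n : ℝ) - hw y - j = ((n - hw y : ℕ) : ℝ) - j := by
    rw [Nat.cast_sub (hw_le y)]
  rw [walkProb, mul_assoc, sum_congr rfl fun v _ => hterm v, sum_ite_le_eq_sum_choose,
    sum_range_choose_mul_ite]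
  simp_rw [choose_mul_factorial_div_factorial _ _ _ (hw_pos hyi), ← mul_sum, hcast,
    sum_range_eq_add_Ico _ hw1, ← Ico_add_one_right_eq_Icc, Nat.sub_add_cancel hw1]
  simp

/-- The probability that a random walk of length `w` down the Boolean lattice with
cutoff at level `c`, from a uniform start, traverses a fixed edge `(y, x)` with
`x = y^{⊕i}`, `y_i = 1`, `ℓ = h(y)` and `h(x) = ℓ − 1 ≥ ⌈c⌉`, equals
`2^{−n} · (1/ℓ) · (1 + Σ_{a=1}^{w−1} Π_{j=0}^{a−1} (n−ℓ−j)/(ℓ+a−j))`. -/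
theorem prob_traverse_edge (n : ℕ) (hn : 1 ≤ n) (w : ℕ) (hw1 : 1 ≤ w) (c : ℝ)
    (y : Fin n → Bool) (i : Fin n) (hyi : y i = true) (ℓ : ℕ) (hℓ : hw y = ℓ)
    (hcut : ⌈c⌉ ≤ (ℓ : ℤ) - 1) :
    walkProb (fun v σ => traverses w c y (bflip y i) v σ)
      = (2 ^ n : ℝ)⁻¹ * (1 / ℓ) *
        (1 + ∑ a ∈ Finset.Icc 1 (w - 1), ∏ j ∈ Finset.range a,
          ((n : ℝ) - ℓ - j) / ((ℓ : ℝ) + a - j)) :=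
  prob_traverse_edge_general n w hw1 c y i hyi ℓ hℓ hcut
end

section
/- Let n ≥ 2, let ε̃ ∈ (0, 1], let s* = (1/2)·√(2n·log(2n/ε̃)), and let w be a positive integer with w ≤ ε̃·√n / (16·√(2·log(2n/ε̃))), w ≤ s*, and s* + w < n/2. Then for every integer ℓ with n/2 ≤ ℓ ≤ n/2 + s* and every integer i with 1 ≤ i ≤ w, the product ∏_{j=0}^{i−1} (n−ℓ−j)/(ℓ+i−j) satisfies 1 − ε̃/2 ≤ ∏_{j=0}^{i−1} (n−ℓ−j)/(ℓ+i−j) ≤ 1. -/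
/-!
Since `ℓ ≥ n/2`, each factor `(n-ℓ-j)/(ℓ+i-j)` lies in `[0, 1]`, and its defect
`1 - (n-ℓ-j)/(ℓ+i-j) = (2ℓ+i-n)/(ℓ+i-j)` is at most `(2s*+w)/(n/2)`. By the Weierstrass product
inequality `1 - ∑ aⱼ ≤ ∏ (1 - aⱼ)` for `aⱼ ∈ [0, 1]`, the product is therefore at least
`1 - w(2s*+w)/(n/2)`, and `w(2s*+w) ≤ 3ws* ≤ 3ε̃n/32` by the choice of `w` and `s*`.
-/

open Finset

theorem Finset.one_sub_sum_one_sub_le_prod {ι R : Type*} [CommRing R] [PartialOrder R]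
    [IsOrderedRing R] (s : Finset ι) {f : ι → R} (h0 : ∀ i ∈ s, 0 ≤ f i)
    (h1 : ∀ i ∈ s, f i ≤ 1) : 1 - ∑ i ∈ s, (1 - f i) ≤ ∏ i ∈ s, f i := by
  classical
  induction s using Finset.induction_on with
  | empty => simp
  | insert a s ha ih =>
    rw [sum_insert ha, prod_insert ha]
    have hf0 := h0 a (mem_insert_self a s)
    have hf1 := h1 a (mem_insert_self a s)
    have hS : 0 ≤ ∑ i ∈ s, (1 - f i) :=
      sum_nonneg fun i hi ↦ sub_nonneg.2 (h1 i (mem_insert_of_mem hi))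
    have hP := ih (fun i hi ↦ h0 i (mem_insert_of_mem hi)) fun i hi ↦ h1 i (mem_insert_of_mem hi)
    calc 1 - (1 - f a + ∑ i ∈ s, (1 - f i)) ≤ f a * (1 - ∑ i ∈ s, (1 - f i)) := by
          rw [← sub_nonneg]
          convert mul_nonneg (sub_nonneg.2 hf1) hS using 1
          ring
      _ ≤ f a * ∏ i ∈ s, f i := mul_le_mul_of_nonneg_left hP hf0

theorem mul_le_of_le_div_sqrt_of_eq_half_sqrt {w s ε x L : ℝ} (hx : 0 ≤ x)
    (hs : s = 1 / 2 * √(2 * x * L)) (hs0 : 0 < s) (hw : w ≤ ε * √x / (16 * √(2 * L))) :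
    w * s ≤ ε * x / 32 := by
  rw [show 2 * x * L = x * (2 * L) by ring, Real.sqrt_mul hx] at hs
  have hL : √(2 * L) ≠ 0 := fun h ↦ by simp [h] at hs; linarith
  calc w * s ≤ ε * √x / (16 * √(2 * L)) * s := mul_le_mul_of_nonneg_right hw hs0.le
    _ = ε * (√x * √x) / 32 := by rw [hs]; field_simp; ring
    _ = ε * x / 32 := by rw [Real.mul_self_sqrt hx]

theorem one_sub_div_le_of_le {a b c : ℝ} (hc : 0 < c) (hcb : c ≤ b) (hab : a ≤ b) :
    1 - a / b ≤ (b - a) / c := by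
  rw [one_sub_div (hc.trans_le hcb).ne']
  exact div_le_div_of_nonneg_left (sub_nonneg.2 hab) hc hcb

theorem ratio_bounds_of_half_le {n ℓ i j : ℝ} (hn : 0 < n) (hℓ : n / 2 ≤ ℓ) (hj : 0 ≤ j)
    (hji : j < i) (hℓj : ℓ + j ≤ n) :
    0 ≤ (n - ℓ - j) / (ℓ + i - j) ∧ (n - ℓ - j) / (ℓ + i - j) ≤ 1 ∧
      1 - (n - ℓ - j) / (ℓ + i - j) ≤ (2 * ℓ + i - n) / (n / 2) := by
  have hden : n / 2 ≤ ℓ + i - j := by linarith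
  have hnum : n - ℓ - j ≤ ℓ + i - j := by linarith
  refine ⟨div_nonneg (by linarith) (by linarith), div_le_one_of_le₀ hnum (by linarith), ?_⟩
  convert one_sub_div_le_of_le (by positivity) hden hnum using 2
  ring

theorem product_bounds_above_middle_general (n : ℕ)
    (εt : ℝ)
    (s : ℝ) (hs : s = (1 / 2) * Real.sqrt (2 * n * Real.log (2 * n / εt)))
    (w : ℕ) (hw0 : 1 ≤ w)
    (hw1 : (w : ℝ) ≤ εt * Real.sqrt n / (16 * Real.sqrt (2 * Real.log (2 * n / εt))))
    (hw2 : (w : ℝ) ≤ s) (hws : s + w < n / 2) :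
    ∀ ℓ : ℕ, (n : ℝ) / 2 ≤ ℓ → (ℓ : ℝ) ≤ n / 2 + s →
      ∀ i : ℕ, 1 ≤ i → i ≤ w →
        1 - εt / 2 ≤ ∏ j ∈ Finset.range i, ((n : ℝ) - ℓ - j) / ((ℓ : ℝ) + i - j) ∧
        ∏ j ∈ Finset.range i, ((n : ℝ) - ℓ - j) / ((ℓ : ℝ) + i - j) ≤ 1 := by
  intro ℓ hℓ hℓs i _ hiw
  have hw : (1 : ℝ) ≤ w := by exact_mod_cast hw0
  have hiw' : (i : ℝ) ≤ w := by exact_mod_cast hiw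
  have hs0 : 0 < s := by linarith
  have hn : (0 : ℝ) < n := by linarith
  have hws32 : w * s ≤ εt * n / 32 :=
    mul_le_of_le_div_sqrt_of_eq_half_sqrt n.cast_nonneg hs hs0 hw1
  have hfac : ∀ j ∈ range i, 0 ≤ ((n : ℝ) - ℓ - j) / ((ℓ : ℝ) + i - j) ∧
      ((n : ℝ) - ℓ - j) / ((ℓ : ℝ) + i - j) ≤ 1 ∧
      1 - ((n : ℝ) - ℓ - j) / ((ℓ : ℝ) + i - j) ≤ (2 * s + w) / (n / 2) := by
    intro j hj
    have hji : (j : ℝ) < i := by exact_mod_cast mem_range.1 hj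
    obtain ⟨h0, h1, h2⟩ := ratio_bounds_of_half_le hn hℓ j.cast_nonneg hji (by linarith)
    exact ⟨h0, h1, h2.trans (div_le_div_of_nonneg_right (by linarith) (by positivity))⟩
  have hsum : ∑ j ∈ range i, (1 - ((n : ℝ) - ℓ - j) / ((ℓ : ℝ) + i - j)) ≤ εt / 2 :=
    calc _ ≤ ∑ _j ∈ range i, (2 * s + w) / (n / 2) := sum_le_sum fun j hj ↦ (hfac j hj).2.2
      _ = i * ((2 * s + w) / (n / 2)) := by simp
      _ ≤ w * ((2 * s + w) / (n / 2)) := mul_le_mul_of_nonneg_right hiw' (by positivity)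
      _ ≤ εt / 2 := by
        rw [mul_div_assoc', div_le_iff₀ (by positivity)]
        nlinarith
  refine ⟨?_, prod_le_one (fun j hj ↦ (hfac j hj).1) fun j hj ↦ (hfac j hj).2.1⟩
  linarith [one_sub_sum_one_sub_le_prod (range i) (fun j hj ↦ (hfac j hj).1)
    fun j hj ↦ (hfac j hj).2.1]

/-- For `n ≥ 2`, `ε̃ ∈ (0,1]`, `s* = (1/2)√(2n·log(2n/ε̃))` and a positive integer
`w ≤ ε̃√n/(16√(2log(2n/ε̃)))` with `w ≤ s*` and `s* + w < n/2`: for every integer `ℓ`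
with `n/2 ≤ ℓ ≤ n/2 + s*` and every integer `i` with `1 ≤ i ≤ w`,
`1 − ε̃/2 ≤ Π_{j=0}^{i−1} (n−ℓ−j)/(ℓ+i−j) ≤ 1`. -/
theorem product_bounds_above_middle (n : ℕ) (hn : 2 ≤ n)
    (εt : ℝ) (hεt0 : 0 < εt) (hεt1 : εt ≤ 1)
    (s : ℝ) (hs : s = (1 / 2) * Real.sqrt (2 * n * Real.log (2 * n / εt)))
    (w : ℕ) (hw0 : 1 ≤ w)
    (hw1 : (w : ℝ) ≤ εt * Real.sqrt n / (16 * Real.sqrt (2 * Real.log (2 * n / εt))))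
    (hw2 : (w : ℝ) ≤ s) (hws : s + w < n / 2) :
    ∀ ℓ : ℕ, (n : ℝ) / 2 ≤ ℓ → (ℓ : ℝ) ≤ n / 2 + s →
      ∀ i : ℕ, 1 ≤ i → i ≤ w →
        1 - εt / 2 ≤ ∏ j ∈ Finset.range i, ((n : ℝ) - ℓ - j) / ((ℓ : ℝ) + i - j) ∧
        ∏ j ∈ Finset.range i, ((n : ℝ) - ℓ - j) / ((ℓ : ℝ) + i - j) ≤ 1 :=
  product_bounds_above_middle_general n εt s hs w hw0 hw1 hw2 hws
end

section
/- Let n ≥ 2, let ε̃ ∈ (0, 1], let s* = (1/2)·√(2n·log(2n/ε̃)), and let w be a positive integer with w ≤ ε̃·√n / (16·√(2·log(2n/ε̃))), w < n/4, and s* + w < n/2. Then for every integer ℓ with n/2 − s* ≤ ℓ < n/2 and every integer i with 1 ≤ i ≤ w, the product ∏_{j=0}^{i−1} (n−ℓ−j)/(ℓ+i−j) satisfies 1 − ε̃/2 ≤ ∏_{j=0}^{i−1} (n−ℓ−j)/(ℓ+i−j) ≤ 1 + ε̃/2. -/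
/-!
Write `δ = (2s* + w)/(ℓ + 1)`. Every factor equals `1 + (n - 2ℓ - i)/(ℓ + i - j)`, and
`|n - 2ℓ - i| ≤ 2s* + w` while `ℓ + i - j ≥ ℓ + 1`, so each factor lies within `δ` of `1`.
A product of `i` such factors lies in `[(1 - δ)^i, (1 + δ)^i] ⊆ [1 - iδ, 1/(1 - iδ)]`, hence
within `2iδ` of `1` once `iδ ≤ 1/2`. The hypothesis on `w` gives `w s* ≤ ε̃n/32` and
`w² ≤ ε̃n/512`; as `w ≥ 1` the first also gives `ℓ ≥ n/2 - s* ≥ 15n/32`, and together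
these make `4iδ ≤ ε̃`.
-/

open Finset Real

theorem abs_prod_sub_one_le {ι : Type*} (s : Finset ι) (f : ι → ℝ) {δ : ℝ}
    (hf : ∀ j ∈ s, |f j - 1| ≤ δ) (hδ : #s * δ ≤ 1 / 2) :
    |∏ j ∈ s, f j - 1| ≤ 2 * #s * δ := by
  obtain rfl | ⟨j₀, hj₀⟩ := s.eq_empty_or_nonempty
  · simp
  have hδ0 : 0 ≤ δ := (abs_nonneg _).trans (hf j₀ hj₀)
  have hcard : (1 : ℝ) ≤ #s := by exact_mod_cast card_pos.2 ⟨j₀, hj₀⟩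
  have hδ1 : δ ≤ 1 / 2 := (le_mul_of_one_le_left hδ0 hcard).trans hδ
  have hbounds : ∀ j ∈ s, 1 - δ ≤ f j ∧ f j ≤ 1 + δ := fun j hj => by
    have := abs_sub_le_iff.1 (hf j hj)
    constructor <;> linarith
  have hlower : 1 - #s * δ ≤ ∏ j ∈ s, f j :=
    calc 1 - #s * δ = 1 + #s * ((1 - δ) - 1) := by ring
      _ ≤ (1 - δ) ^ #s := one_add_mul_sub_le_pow (by linarith) _
      _ = ∏ _j ∈ s, (1 - δ) := (prod_const _).symm
      _ ≤ ∏ j ∈ s, f j := prod_le_prod (fun _ _ => by linarith) fun j hj => (hbounds j hj).1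
  have hupper : ∏ j ∈ s, f j ≤ 1 / (1 - #s * δ) :=
    calc ∏ j ∈ s, f j ≤ ∏ _j ∈ s, (1 + δ) :=
          prod_le_prod (fun j hj => by linarith [hbounds j hj]) fun j hj => (hbounds j hj).2
      _ = (1 + δ) ^ #s := prod_const _
      _ ≤ exp δ ^ #s := by gcongr; linarith [add_one_le_exp δ]
      _ = exp (#s * δ) := (exp_nat_mul δ _).symm
      _ ≤ 1 / (1 - #s * δ) := exp_bound_div_one_sub_of_interval (by positivity) (by linarith)
  have hinv : 1 / (1 - #s * δ) ≤ 1 + 2 * #s * δ := by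
    rw [div_le_iff₀ (by linarith)]
    nlinarith [mul_nonneg (Nat.cast_nonneg (α := ℝ) #s) hδ0]
  rw [abs_sub_le_iff]
  constructor <;> linarith

theorem abs_div_sub_one_le (n : ℝ) {ℓ i j : ℕ} (hj : j < i) :
    |(n - ℓ - j) / (ℓ + i - j) - 1| ≤ |n - 2 * ℓ - i| / (ℓ + 1) := by
  have hden : (ℓ : ℝ) + 1 ≤ ℓ + i - j := by
    have : (j : ℝ) + 1 ≤ i := by exact_mod_cast hj
    linarith
  have hden0 : (0 : ℝ) < ℓ + i - j := by linarith
  rw [div_sub_one hden0.ne', abs_div, abs_of_pos hden0,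
    show n - ℓ - j - (ℓ + i - j) = n - 2 * ℓ - i by ring]
  gcongr

theorem one_le_log_two_mul_div {n ε : ℝ} (hn : 2 ≤ n) (hε0 : 0 < ε) (hε1 : ε ≤ 1) :
    1 ≤ log (2 * n / ε) := by
  rw [le_log_iff_exp_le (by positivity), le_div_iff₀ hε0]
  nlinarith [exp_one_lt_three]

section WidthBounds

variable {n L ε w : ℝ}

theorem mul_half_sqrt_le_of_le_div_sqrt (hn : 0 ≤ n) (hL : 0 < L)
    (hw : w ≤ ε * √n / (16 * √(2 * L))) :
    w * (1 / 2 * √(2 * n * L)) ≤ ε * n / 32 := by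
  have hb : 0 < √(2 * L) := sqrt_pos.2 (by positivity)
  rw [show 2 * n * L = n * (2 * L) by ring, sqrt_mul hn]
  calc w * (1 / 2 * (√n * √(2 * L)))
      ≤ ε * √n / (16 * √(2 * L)) * (1 / 2 * (√n * √(2 * L))) := by gcongr
    _ = ε * √n ^ 2 / 32 := by field_simp; ring
    _ = ε * n / 32 := by rw [sq_sqrt hn]

theorem sq_le_of_le_div_sqrt (hn : 0 ≤ n) (hL : 1 ≤ L) (hε0 : 0 ≤ ε) (hε1 : ε ≤ 1) (hw0 : 0 ≤ w)
    (hw : w ≤ ε * √n / (16 * √(2 * L))) :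
    w ^ 2 ≤ ε * n / 512 := by
  calc w ^ 2 ≤ (ε * √n / (16 * √(2 * L))) ^ 2 := by gcongr
    _ = ε ^ 2 * n / (512 * L) := by
      rw [div_pow, mul_pow, mul_pow, sq_sqrt hn, sq_sqrt (by linarith)]; ring
    _ ≤ ε ^ 2 * n / 512 := by gcongr; linarith
    _ ≤ ε * n / 512 := by gcongr; exact pow_le_of_le_one hε0 hε1 two_ne_zero

end WidthBounds

theorem four_mul_mul_two_mul_add_le {n s w ε ℓ i : ℝ} (hn : 0 ≤ n) (hε0 : 0 ≤ ε) (hε1 : ε ≤ 1)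
    (hs : 0 ≤ s) (hw : 1 ≤ w) (hiw : i ≤ w) (hws : w * s ≤ ε * n / 32)
    (hww : w ^ 2 ≤ ε * n / 512) (hℓ : n / 2 - s ≤ ℓ) :
    4 * i * (2 * s + w) ≤ ε * ℓ := by
  have hsn : s ≤ n / 32 := by nlinarith
  nlinarith

theorem product_bounds_below_middle_general (n : ℕ) (hn : 2 ≤ n)
    (εt : ℝ) (hεt0 : 0 < εt) (hεt1 : εt ≤ 1)
    (s : ℝ) (hs : s = (1 / 2) * Real.sqrt (2 * n * Real.log (2 * n / εt)))
    (w : ℕ) (hw0 : 1 ≤ w)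
    (hw1 : (w : ℝ) ≤ εt * Real.sqrt n / (16 * Real.sqrt (2 * Real.log (2 * n / εt)))) :
    ∀ ℓ : ℕ, (n : ℝ) / 2 - s ≤ ℓ → (ℓ : ℝ) < n / 2 →
      ∀ i : ℕ, 1 ≤ i → i ≤ w →
        1 - εt / 2 ≤ ∏ j ∈ Finset.range i, ((n : ℝ) - ℓ - j) / ((ℓ : ℝ) + i - j) ∧
        ∏ j ∈ Finset.range i, ((n : ℝ) - ℓ - j) / ((ℓ : ℝ) + i - j) ≤ 1 + εt / 2 := by
  intro ℓ hℓ hℓn i _ hiw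
  have hL : 1 ≤ log (2 * n / εt) := one_le_log_two_mul_div (by exact_mod_cast hn) hεt0 hεt1
  have hs0 : 0 ≤ s := hs ▸ by positivity
  have hws : (w : ℝ) * s ≤ εt * n / 32 :=
    hs ▸ mul_half_sqrt_le_of_le_div_sqrt (Nat.cast_nonneg n) (by linarith) hw1
  have hww : (w : ℝ) ^ 2 ≤ εt * n / 512 :=
    sq_le_of_le_div_sqrt (Nat.cast_nonneg n) hL hεt0.le hεt1 (Nat.cast_nonneg w) hw1
  have hkey : 4 * i * (2 * s + w) ≤ εt * ℓ := four_mul_mul_two_mul_add_le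
    (Nat.cast_nonneg n) hεt0.le hεt1 hs0 (by exact_mod_cast hw0) (by exact_mod_cast hiw) hws hww hℓ
  have hnum : |(n : ℝ) - 2 * ℓ - i| ≤ 2 * s + w := by
    have : (i : ℝ) ≤ w := by exact_mod_cast hiw
    rw [abs_le]; constructor <;> linarith [Nat.cast_nonneg (α := ℝ) i]
  set δ := (2 * s + w) / ((ℓ : ℝ) + 1)
  have hfactor : ∀ j ∈ range i, |((n : ℝ) - ℓ - j) / ((ℓ : ℝ) + i - j) - 1| ≤ δ := fun j hj =>
    (abs_div_sub_one_le n (mem_range.1 hj)).trans (div_le_div_of_nonneg_right hnum (by positivity))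
  have hiδ : 4 * i * δ ≤ εt := by
    rw [← mul_div_assoc, div_le_iff₀ (by positivity)]
    linarith
  have hprod := abs_prod_sub_one_le (range i) _ hfactor (by rw [card_range]; linarith)
  rw [card_range, abs_sub_le_iff] at hprod
  constructor <;> linarith

/-- For `n ≥ 2`, `ε̃ ∈ (0,1]`, `s* = (1/2)√(2n·log(2n/ε̃))` and a positive integer
`w ≤ ε̃√n/(16√(2log(2n/ε̃)))` with `w < n/4` and `s* + w < n/2`: for every integer `ℓ`
with `n/2 − s* ≤ ℓ < n/2` and every integer `i` with `1 ≤ i ≤ w`,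
`1 − ε̃/2 ≤ Π_{j=0}^{i−1} (n−ℓ−j)/(ℓ+i−j) ≤ 1 + ε̃/2`. -/
theorem product_bounds_below_middle (n : ℕ) (hn : 2 ≤ n)
    (εt : ℝ) (hεt0 : 0 < εt) (hεt1 : εt ≤ 1)
    (s : ℝ) (hs : s = (1 / 2) * Real.sqrt (2 * n * Real.log (2 * n / εt)))
    (w : ℕ) (hw0 : 1 ≤ w)
    (hw1 : (w : ℝ) ≤ εt * Real.sqrt n / (16 * Real.sqrt (2 * Real.log (2 * n / εt))))
    (hw2 : (w : ℝ) < n / 4) (hws : s + w < n / 2) :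
    ∀ ℓ : ℕ, (n : ℝ) / 2 - s ≤ ℓ → (ℓ : ℝ) < n / 2 →
      ∀ i : ℕ, 1 ≤ i → i ≤ w →
        1 - εt / 2 ≤ ∏ j ∈ Finset.range i, ((n : ℝ) - ℓ - j) / ((ℓ : ℝ) + i - j) ∧
        ∏ j ∈ Finset.range i, ((n : ℝ) - ℓ - j) / ((ℓ : ℝ) + i - j) ≤ 1 + εt / 2 :=
  product_bounds_below_middle_general n hn εt hεt0 hεt1 s hs w hw0 hw1
end

section
/- Let 1 ≤ k < n, let 0 ≤ t̃ ≤ k, and let R be any subset of {z ∈ {0,1}^k : h(z) = t̃}. Define f_R : {0,1}^n → {0,1} by: if (x_1, …, x_k) ∈ R then f_R(x) = maj'_{n−k}(x_{k+1}, …, x_n), and otherwise f_R(x) = 1 if and only if Σ_{i=1}^k x_i ≥ t̃. Then f_R is monotone. -/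
/-- The restriction of `x : {0,1}^n` to its first `k` coordinates. -/
def prefixK {n : ℕ} (k : ℕ) (hk : k ≤ n) (x : Fin n → Bool) : Fin k → Bool :=
  fun j => x (Fin.castLE hk j)

/-- The restriction of `x : {0,1}^n` to its last `n − k` coordinates. -/
def suffixK {n : ℕ} (k : ℕ) (x : Fin n → Bool) : Fin (n - k) → Bool :=
  fun j => x ⟨k + (j : ℕ), by have := j.isLt; omega⟩

/-- `maj'_m(z) = 1` iff `Σ_{i=1}^m z_i > m/2`. -/
def majB {m : ℕ} (z : Fin m → Bool) : Bool := decide (m < 2 * hw z)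

/-- `f` is monotone if `x ≤ y` coordinatewise implies `f(x) ≤ f(y)`. -/
def MonotoneBF {n : ℕ} (f : (Fin n → Bool) → Bool) : Prop :=
  ∀ x y : Fin n → Bool, (∀ i, x i ≤ y i) → f x ≤ f y

lemma hw_mono_s12 {m : ℕ} {x y : Fin m → Bool} (h : ∀ i, x i ≤ y i) : hw x ≤ hw y := by
  apply Finset.card_le_card
  intro i hi
  simp only [Finset.mem_filter, Finset.mem_univ, true_and] at *
  exact Bool.le_iff_imp.mp (h i) hi

lemma hw_eq_of_le {m : ℕ} {x y : Fin m → Bool} (h : ∀ i, x i ≤ y i)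
    (hc : hw y ≤ hw x) : x = y := by
  have hsub : (Finset.univ.filter (fun i => x i = true)) ⊆
      (Finset.univ.filter (fun i => y i = true)) := by
    intro i hi
    simp only [Finset.mem_filter, Finset.mem_univ, true_and] at *
    exact Bool.le_iff_imp.mp (h i) hi
  have heq := Finset.eq_of_subset_of_card_le hsub hc
  funext i
  by_cases hy : y i = true
  · have : i ∈ Finset.univ.filter (fun i => x i = true) := by
      rw [heq]; simp [hy]
    simp only [Finset.mem_filter] at this
    rw [this.2, hy]
  · have hx := h i
    simp only [Bool.not_eq_true] at hy
    rw [hy] at hx ⊢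
    exact le_antisymm hx (Bool.false_le _)

/-- For `1 ≤ k < n`, `0 ≤ t̃ ≤ k` and `R ⊆ {z ∈ {0,1}^k : h(z) = t̃}`, the function
`f_R` defined by `f_R(x) = maj'_{n−k}(x_{k+1}, …, x_n)` if `(x_1, …, x_k) ∈ R` and
`f_R(x) = [Σ_{i=1}^k x_i ≥ t̃]` otherwise, is monotone. -/
theorem hidden_majority_monotone (n k : ℕ) (hk1 : 1 ≤ k) (hkn : k < n)
    (t : ℕ) (htk : t ≤ k)
    (R : Finset (Fin k → Bool)) (hR : ∀ z ∈ R, hw z = t)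
    (fR : (Fin n → Bool) → Bool)
    (hfR : fR = fun x =>
      if prefixK k hkn.le x ∈ R then majB (suffixK k x)
      else decide (t ≤ hw (prefixK k hkn.le x))) :
    MonotoneBF fR := by
  subst hfR
  intro x y hxy
  simp only
  have hpre : ∀ i, prefixK k hkn.le x i ≤ prefixK k hkn.le y i := fun i => hxy _
  have hsuf : ∀ i, suffixK k x i ≤ suffixK k y i := fun i => hxy _
  have hhp := hw_mono_s12 hpre
  have hhs := hw_mono_s12 hsuf
  by_cases hx : prefixK k hkn.le x ∈ R <;> by_cases hy : prefixK k hkn.le y ∈ R <;>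
    simp only [hx, hy, if_pos, if_neg, not_false_iff, majB, Bool.le_iff_imp,
      decide_eq_true_eq]
  · omega
  · have := hR _ hx; omega
  · intro ht
    have hle : hw (prefixK k hkn.le y) ≤ hw (prefixK k hkn.le x) := by
      rw [hR _ hy]; exact ht
    exact absurd ((hw_eq_of_le hpre hle).symm ▸ hy) hx
  · omega
end
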